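/- Define a_i = C(i, ⌊i/2⌋)/2^i and A_n = Σ_{i=0}^n a_i. Then A_n = √(8/π)·√n + O(1), i.e., there exists a constant C such that |A_n - √(8/π)·√n| ≤ C for all n ≥ 1. -/

import Mathlib

open Real Filter Topology

/-- `a_i = C(i, ⌊i/2⌋)/2^i`. -/
noncomputable def aSeq (i : ℕ) : ℝ := (i.choose (i / 2) : ℝ) / 2 ^ i

noncomputable def cB (m : ℕ) : ℝ := (Nat.centralBinom m : ℝ) / 4 ^ m

lemma cB_pos (m : ℕ) : 0 < cB m :=
  div_pos (by exact_mod_cast m.centralBinom_pos) (by positivity)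

lemma cB_succ (m : ℕ) : cB (m+1) = cB m * ((2*m+1) / (2*m+2)) := by
  have h : ((m:ℝ)+1) * (Nat.centralBinom (m+1) : ℝ)
      = 2*(2*m+1) * Nat.centralBinom m := by exact_mod_cast Nat.succ_mul_centralBinom_succ m
  unfold cB
  rw [pow_succ]
  have h4 : (4:ℝ)^m ≠ 0 := by positivity
  field_simp
  linear_combination 2 * h

lemma cB_factorial (m : ℕ) : (Nat.centralBinom m : ℝ) = Nat.factorial (2*m) / (Nat.factorial m ^ 2) := by
  have h := Nat.choose_mul_factorial_mul_factorial (show m ≤ 2*m by omega)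
  have h2 : 2*m - m = m := by omega
  rw [h2] at h
  have : (Nat.centralBinom m : ℝ) * (Nat.factorial m * Nat.factorial m) = Nat.factorial (2*m) := by
    rw [Nat.centralBinom, ← mul_assoc]; exact_mod_cast h
  have hf : (Nat.factorial m : ℝ) ≠ 0 := by exact_mod_cast (Nat.factorial_pos m).ne'
  field_simp [pow_two]
  linarith [this]

lemma W_eq_cB (m : ℕ) : Real.Wallis.W m = 1 / ((2*m+1) * (cB m)^2) := by
  rw [Real.Wallis.W_eq_factorial_ratio]
  unfold cB
  rw [cB_factorial]
  have hf : (Nat.factorial m : ℝ) ≠ 0 := by exact_mod_cast (Nat.factorial_pos m).ne'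
  have hf2 : (Nat.factorial (2*m) : ℝ) ≠ 0 := by exact_mod_cast (Nat.factorial_pos (2*m)).ne'
  have h4 : (4:ℝ)^m ≠ 0 := by positivity
  have h2 : (2:ℝ)^(4*m) = (4^m)^2 := by
    rw [show (4:ℝ) = 2^2 by norm_num, ← pow_mul, ← pow_mul]; ring_nf
  have hm : (0:ℝ) < 2*m+1 := by positivity
  field_simp
  rw [h2]

noncomputable def aW (m : ℕ) : ℝ := (2*m+1) * (cB m)^2

lemma aW_pos (m : ℕ) : 0 < aW m := by
  have := cB_pos m; unfold aW; positivity

lemma aW_tendsto : Tendsto aW atTop (𝓝 (2/π)) := by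
  have h2 := (Real.Wallis.tendsto_W_nhds_pi_div_two).inv₀ (by positivity : (π/2:ℝ) ≠ 0)
  have he : (fun m => (Real.Wallis.W m)⁻¹) = aW := by
    funext m; rw [W_eq_cB, one_div, inv_inv]; rfl
  rw [he] at h2
  convert h2 using 1
  rw [inv_div]

lemma aW_anti : Antitone aW := by
  apply antitone_nat_of_succ_le
  intro m
  have hc := cB_pos m
  have hsq := sq_nonneg (cB m)
  unfold aW
  rw [cB_succ, mul_pow, div_pow]
  push_cast
  have hd : (0:ℝ) < (2*(m:ℝ)+2)^2 := by positivity
  rw [show (2*((m:ℝ)+1)+1) * (cB m ^2 * ((2*(m:ℝ)+1)^2/(2*(m:ℝ)+2)^2))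
      = ((2*((m:ℝ)+1)+1) * (cB m^2 * (2*(m:ℝ)+1)^2))/(2*(m:ℝ)+2)^2 by ring, div_le_iff₀ hd]
  nlinarith [sq_nonneg (cB m), Nat.cast_nonneg (α := ℝ) m]

lemma aW_zero : aW 0 = 1 := by
  unfold aW cB
  simp [Nat.centralBinom]

lemma cBsq_tendsto0 : Tendsto (fun m : ℕ => cB m ^ 2) atTop (𝓝 0) := by
  refine squeeze_zero (f := fun m : ℕ => cB m ^ 2) (g := fun m : ℕ => 1/((m:ℝ)+1))
    (fun m => sq_nonneg (cB m)) ?_ tendsto_one_div_add_atTop_nhds_zero_nat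
  intro m
  have h1 : aW m ≤ 1 := aW_zero ▸ aW_anti (Nat.zero_le m)
  have h2 : (0:ℝ) < 2*m+1 := by positivity
  have h3 : ((m:ℝ)+1) ≤ 2*m+1 := by push_cast; linarith [Nat.cast_nonneg (α := ℝ) m]
  rw [le_div_iff₀ (by positivity)]
  unfold aW at h1
  nlinarith [sq_nonneg (cB m), Nat.cast_nonneg (α := ℝ) m]

lemma bW_tendsto : Tendsto (fun m : ℕ => (m:ℝ) * cB m ^ 2) atTop (𝓝 (1/π)) := by
  have he : (fun m : ℕ => (m:ℝ) * cB m ^ 2) = fun m => aW m / 2 - cB m ^ 2 / 2 := by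
    funext m; unfold aW; ring
  rw [he]
  have h := (aW_tendsto.div_const 2).sub (cBsq_tendsto0.div_const 2)
  convert h using 2
  rw [zero_div, sub_zero]
  ring

lemma bW_mono : Monotone (fun m : ℕ => (m:ℝ) * cB m ^ 2) := by
  apply monotone_nat_of_le_succ
  intro m
  have hc := cB_pos m
  show (m:ℝ) * cB m ^ 2 ≤ _
  rw [cB_succ, mul_pow, div_pow]
  push_cast
  have hd : (0:ℝ) < (2*(m:ℝ)+2)^2 := by positivity
  rw [show ((m:ℝ)+1) * (cB m ^2 * ((2*(m:ℝ)+1)^2/(2*(m:ℝ)+2)^2))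
      = (((m:ℝ)+1) * (cB m^2 * (2*(m:ℝ)+1)^2))/(2*(m:ℝ)+2)^2 by ring, le_div_iff₀ hd]
  nlinarith [sq_nonneg (cB m), Nat.cast_nonneg (α := ℝ) m]

lemma key_up (m : ℕ) : (m:ℝ) * cB m ^ 2 ≤ 1/π := bW_mono.ge_of_tendsto bW_tendsto m

lemma key_lo_aW (m : ℕ) : 2/π ≤ aW m := aW_anti.le_of_tendsto aW_tendsto m

lemma key_lo (m : ℕ) : 2/π ≤ (2*(m:ℝ)+1) * (cB m)^2 := by
  have h := key_lo_aW m
  unfold aW at h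
  exact h


lemma cB_zero : cB 0 = 1 := by simp [cB, Nat.centralBinom]

lemma aSeq_even (m : ℕ) : aSeq (2*m) = cB m := by
  unfold aSeq cB
  rw [show (2*m)/2 = m by omega, pow_mul, Nat.centralBinom]
  norm_num

lemma centralBinom_succ_eq (m : ℕ) : Nat.centralBinom (m+1) = 2 * (2*m+1).choose m := by
  rw [Nat.centralBinom, show 2*(m+1) = (2*m+1)+1 by ring, show m+1 = m+1 from rfl,
    Nat.choose_succ_succ, Nat.choose_symm_half]
  ring

lemma aSeq_odd (m : ℕ) : aSeq (2*m+1) = cB (m+1) := by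
  unfold aSeq cB
  rw [show (2*m+1)/2 = m by omega, centralBinom_succ_eq]
  rw [pow_succ, pow_succ, pow_mul]
  push_cast
  norm_num
  ring

noncomputable def tB (m : ℕ) : ℝ := (2*(m:ℝ)+1) * cB m

lemma tB_eq (m : ℕ) : tB m = (2*(m:ℝ)+2) * cB (m+1) := by
  unfold tB
  rw [cB_succ]
  have : (2*(m:ℝ)+2) ≠ 0 := by positivity
  field_simp

lemma g_eq (n : ℕ) : ((n:ℝ)+1) * aSeq n = tB (n/2) := by
  rcases Nat.even_or_odd n with ⟨m, hm⟩ | ⟨m, hm⟩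
  · subst hm
    rw [show m+m = 2*m by ring, aSeq_even, show (2*m)/2 = m by omega]
    unfold tB; push_cast; ring
  · subst hm
    rw [aSeq_odd, show (2*m+1)/2 = m by omega, tB_eq]
    push_cast; ring

lemma sum_eq (n : ℕ) : ∑ i ∈ Finset.range (n+1), aSeq i = tB ((n+1)/2) + tB (n/2) - 1 := by
  induction n with
  | zero =>
    simp [aSeq, tB, cB_zero]
  | succ n ih =>
    rw [Finset.sum_range_succ, ih]
    have hd : tB (n/2+1) - tB (n/2) = cB (n/2+1) := by
      rw [tB_eq (n/2)]
      unfold tB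
      push_cast; ring
    have ha : aSeq (n+1) = cB (n/2+1) := by
      rcases Nat.even_or_odd n with ⟨m, hm⟩ | ⟨m, hm⟩
      · subst hm
        rw [show m+m+1 = 2*m+1 by ring, aSeq_odd, show (m+m)/2 = m by omega]
      · subst hm
        rw [show 2*m+1+1 = 2*(m+1) by ring, aSeq_even, show (2*m+1)/2 = m by omega]
    rw [show (n+1+1)/2 = n/2+1 by omega, show (n+1)/2 = (n+1)/2 from rfl]
    rw [ha]
    rcases Nat.even_or_odd n with ⟨m, hm⟩ | ⟨m, hm⟩ <;> subst hm <;> linarith [hd]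


lemma tB_pos (m : ℕ) : 0 < tB m := by
  have := cB_pos m; unfold tB; positivity

lemma tB_lower (m : ℕ) : 2 * Real.sqrt ((m:ℝ)/π) ≤ tB m := by
  have hm : (0:ℝ) ≤ (m:ℝ)/π := by positivity
  have h1 : 4 * ((m:ℝ)/π) ≤ (tB m)^2 := by
    have h2 := key_lo m
    have h3 : (0:ℝ) ≤ (m:ℝ) := Nat.cast_nonneg m
    have hπ : (0:ℝ) < π := pi_pos
    unfold tB
    rw [mul_pow]
    have h4 : 4*((m:ℝ)/π) ≤ (2*(m:ℝ)+1) * (2/π) := by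
      rw [show 4*((m:ℝ)/π) = (4*(m:ℝ))/π by ring, show (2*(m:ℝ)+1) * (2/π) = ((2*(m:ℝ)+1)*2)/π by ring,
        div_le_div_iff_of_pos_right hπ]
      linarith
    nlinarith [sq_nonneg (cB m), cB_pos m]
  calc 2 * Real.sqrt ((m:ℝ)/π) = Real.sqrt (4 * ((m:ℝ)/π)) := by
        rw [show (4:ℝ) = 2^2 by norm_num, Real.sqrt_mul (by positivity), Real.sqrt_sq (by norm_num)]
    _ ≤ Real.sqrt ((tB m)^2) := Real.sqrt_le_sqrt h1
    _ = tB m := Real.sqrt_sq (tB_pos m).le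

lemma tB_upper (m : ℕ) : tB m ≤ 2 * Real.sqrt ((m:ℝ)/π) + 1 := by
  rcases Nat.eq_zero_or_pos m with rfl | hm
  · simp [tB, cB_zero]
  · have hπ : (0:ℝ) < π := pi_pos
    have hm1 : (1:ℝ) ≤ (m:ℝ) := by exact_mod_cast hm
    have hmpos : (0:ℝ) < (m:ℝ) := by linarith
    have hc : cB m ≤ Real.sqrt (1/(π*(m:ℝ))) := by
      rw [Real.le_sqrt (cB_pos m).le (by positivity), le_div_iff₀ (by positivity)]
      have h4 := mul_le_mul_of_nonneg_right (key_up m) hπ.le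
      have h5 : (1/π)*π = 1 := by field_simp
      nlinarith
    set sπ := Real.sqrt π with hsπ
    set sm := Real.sqrt (m:ℝ) with hsm
    have hπ2 : sπ^2 = π := Real.sq_sqrt hπ.le
    have hm2 : sm^2 = (m:ℝ) := Real.sq_sqrt hmpos.le
    have hsπ0 : 0 < sπ := Real.sqrt_pos.mpr hπ
    have hsm0 : 0 < sm := Real.sqrt_pos.mpr hmpos
    have hone : 1 ≤ sπ * sm := by
      have h6 : (1:ℝ) ≤ Real.sqrt (π*(m:ℝ)) := by
        rw [show (1:ℝ) = Real.sqrt 1 by simp]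
        exact Real.sqrt_le_sqrt (by nlinarith [Real.pi_gt_three])
      rwa [Real.sqrt_mul hπ.le] at h6
    have hs : Real.sqrt (1/(π*(m:ℝ))) = 1 / (sπ * sm) := by
      rw [one_div, one_div, ← Real.sqrt_mul hπ.le, Real.sqrt_inv]
    have hq : Real.sqrt ((m:ℝ)/π) = sm / sπ := Real.sqrt_div' _ hπ.le
    have step : tB m ≤ (2*(m:ℝ)+1) * (1 / (sπ * sm)) := by
      unfold tB
      exact mul_le_mul_of_nonneg_left (hs ▸ hc) (by positivity)
    refine step.trans ?_
    rw [hq]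
    have e : 2*(sm/sπ)+1 = (2*sm^2 + sπ*sm)/(sπ*sm) := by field_simp
    rw [e, mul_one_div, div_le_div_iff_of_pos_right (by positivity)]
    nlinarith

lemma sqrt_two_div_pi_le_one : Real.sqrt (2/π) ≤ 1 := by
  rw [show (1:ℝ) = Real.sqrt 1 by simp]
  exact Real.sqrt_le_sqrt (by rw [div_le_one pi_pos]; linarith [Real.pi_gt_three])

lemma sqrt_succ_le (x : ℝ) (hx : 0 ≤ x) : Real.sqrt (x+1) ≤ Real.sqrt x + 1 := by
  rw [show Real.sqrt x + 1 = Real.sqrt ((Real.sqrt x + 1)^2) from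
    (Real.sqrt_sq (by positivity)).symm]
  apply Real.sqrt_le_sqrt
  have := Real.sq_sqrt hx
  nlinarith [Real.sqrt_nonneg x]

lemma half_bound (n : ℕ) : |tB (n/2) - Real.sqrt (2/π) * Real.sqrt (n:ℝ)| ≤ 1 := by
  have hπ : (0:ℝ) < π := pi_pos
  have hsq2 := sqrt_two_div_pi_le_one
  have hs0 : 0 ≤ Real.sqrt (2/π) := Real.sqrt_nonneg _
  have key : ∀ m : ℕ, Real.sqrt (2/π) * Real.sqrt (2*(m:ℝ)) = 2 * Real.sqrt ((m:ℝ)/π) := by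
    intro m
    rw [← Real.sqrt_mul (by positivity), show (2/π) * (2*(m:ℝ)) = 2^2 * ((m:ℝ)/π) by ring,
      Real.sqrt_mul (by positivity), Real.sqrt_sq (by norm_num)]
  rcases Nat.even_or_odd n with ⟨m, hm⟩ | ⟨m, hm⟩
  · subst hm
    rw [show (m+m)/2 = m by omega, show ((m+m:ℕ):ℝ) = 2*(m:ℝ) by push_cast; ring, key]
    rw [abs_le]
    exact ⟨by linarith [tB_lower m], by linarith [tB_upper m]⟩
  · subst hm
    rw [show (2*m+1)/2 = m by omega, show ((2*m+1:ℕ):ℝ) = 2*(m:ℝ)+1 by push_cast; ring]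
    have h1 : Real.sqrt (2*(m:ℝ)) ≤ Real.sqrt (2*(m:ℝ)+1) := Real.sqrt_le_sqrt (by linarith)
    have h2 : Real.sqrt (2*(m:ℝ)+1) ≤ Real.sqrt (2*(m:ℝ)) + 1 := sqrt_succ_le _ (by positivity)
    have hk := key m
    have hlo : 2 * Real.sqrt ((m:ℝ)/π) ≤ Real.sqrt (2/π) * Real.sqrt (2*(m:ℝ)+1) := by
      rw [← hk]; exact mul_le_mul_of_nonneg_left h1 hs0
    have hhi : Real.sqrt (2/π) * Real.sqrt (2*(m:ℝ)+1) ≤ 2 * Real.sqrt ((m:ℝ)/π) + 1 := by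
      calc Real.sqrt (2/π) * Real.sqrt (2*(m:ℝ)+1)
          ≤ Real.sqrt (2/π) * (Real.sqrt (2*(m:ℝ)) + 1) := mul_le_mul_of_nonneg_left h2 hs0
        _ = Real.sqrt (2/π) * Real.sqrt (2*(m:ℝ)) + Real.sqrt (2/π) := by ring
        _ ≤ 2 * Real.sqrt ((m:ℝ)/π) + 1 := by rw [hk]; linarith
    rw [abs_le]
    exact ⟨by linarith [tB_lower m], by linarith [tB_upper m]⟩

/-- `A_n = Σ_{i=0}^n a_i = √(8/π)·√n + O(1)`. -/
theorem aSeq_partial_sum_asymptotic :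
    ∃ C : ℝ, ∀ n : ℕ, 1 ≤ n →
      |(∑ i ∈ Finset.range (n + 1), aSeq i) - Real.sqrt (8 / π) * Real.sqrt n| ≤ C := by
  refine ⟨4, fun n _ => ?_⟩
  rw [sum_eq]
  have h8 : Real.sqrt (8/π) = 2 * Real.sqrt (2/π) := by
    rw [show (8:ℝ)/π = 2^2 * (2/π) by ring, Real.sqrt_mul (by positivity),
      Real.sqrt_sq (by norm_num)]
  have h1 := abs_le.mp (half_bound (n+1))
  have h2 := abs_le.mp (half_bound n)
  rw [show (((n+1:ℕ)):ℝ) = (n:ℝ)+1 by push_cast; ring] at h1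
  have h3 : Real.sqrt ((n:ℝ)+1) ≤ Real.sqrt (n:ℝ) + 1 := sqrt_succ_le _ (by positivity)
  have h4 : Real.sqrt (n:ℝ) ≤ Real.sqrt ((n:ℝ)+1) := Real.sqrt_le_sqrt (by linarith)
  have hsq2 := sqrt_two_div_pi_le_one
  have hs0 : 0 ≤ Real.sqrt (2/π) := Real.sqrt_nonneg _
  have h5a : 0 ≤ Real.sqrt (2/π) * (Real.sqrt ((n:ℝ)+1) - Real.sqrt (n:ℝ)) :=
    mul_nonneg hs0 (by linarith)
  have h5b : Real.sqrt (2/π) * (Real.sqrt ((n:ℝ)+1) - Real.sqrt (n:ℝ)) ≤ 1 := by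
    calc Real.sqrt (2/π) * (Real.sqrt ((n:ℝ)+1) - Real.sqrt (n:ℝ)) ≤ 1 * 1 :=
        mul_le_mul hsq2 (by linarith) (by linarith) (by norm_num)
      _ = 1 := by norm_num
  rw [h8, abs_le]
  obtain ⟨h1a, h1b⟩ := h1
  obtain ⟨h2a, h2b⟩ := h2
  constructor <;> nlinarith
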